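/- arXiv:1906.02066 — 3 statements merged into one kernel-verified Lean document; each statement's English description precedes it below -/
import Mathlib

section
/- Let A be a C*-algebra and a, b ∈ A positive with b ≠ 0. Suppose that for every continuous function f : [0, ‖b‖] → [0,1] with f(0) = 0 and f(‖b‖) ≠ 0 one has a ≾ f(b) (Cuntz subequivalence). Then there is a sequence (z_n) in A with ‖z_n‖ = (‖a‖/‖b‖)^{1/2} for all n and z_n* b z_n → a in norm. -/
/-! For `c < ‖b‖` close to `‖b‖`, apply the hypothesis to a ramp `f` vanishing on `(-∞, c]`.
With `g(t) = √(f(t) / t)`, the element `z = g(b) w` satisfies `z* b z = w* f(b) w ≈ a`, and since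
`g` lives where `t ≥ c`, also `c z* z ≤ z* b z`. Hence `c ‖z‖² ≤ ‖z* b z‖ ≤ ‖b‖ ‖z‖²`, so along a
sequence with `c → ‖b‖` we get `‖z‖² ‖b‖ → ‖a‖`, and rescaling `z` to the exact norm
`√(‖a‖ / ‖b‖)` multiplies `z* b z` by a factor tending to `1`. -/

open Filter Topology

/-- Cuntz subequivalence of positive elements: `a ≾ b` iff there is a sequence `(w_n)`
with `w_n* b w_n → a`. -/
def CuntzLE {A : Type*} [NonUnitalCStarAlgebra A] (a b : A) : Prop :=
  ∃ w : ℕ → A, Tendsto (fun n => star (w n) * b * w n) atTop (𝓝 a)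

section Norm

variable {A : Type*} [NonUnitalCStarAlgebra A]

lemma norm_star_mul_mul_le (z b : A) : ‖star z * b * z‖ ≤ ‖z‖ ^ 2 * ‖b‖ :=
  norm_mul₃_le.trans_eq (by rw [norm_star]; ring)

lemma star_smul_mul_mul_smul (s : ℝ) (z b : A) :
    star (s • z) * b * (s • z) = (s * s) • (star z * b * z) := by
  rw [star_smul, star_trivial, smul_mul_assoc, smul_mul_assoc, mul_smul_comm, smul_smul]

theorem exists_norm_eq_of_tendsto_norm_sq_mul {a b : A} {z : ℕ → A} (ha : a ≠ 0)
    (hz : ∀ n, z n ≠ 0) (hconj : Tendsto (fun n => star (z n) * b * z n) atTop (𝓝 a))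
    (hnorm : Tendsto (fun n => ‖z n‖ ^ 2 * ‖b‖) atTop (𝓝 ‖a‖)) :
    ∃ z' : ℕ → A, (∀ n, ‖z' n‖ = √(‖a‖ / ‖b‖)) ∧
      Tendsto (fun n => star (z' n) * b * z' n) atTop (𝓝 a) := by
  refine ⟨fun n => (√(‖a‖ / ‖b‖) / ‖z n‖) • z n, fun n => ?_, ?_⟩
  · rw [norm_smul, Real.norm_of_nonneg (by positivity),
      div_mul_cancel₀ _ (norm_ne_zero_iff.mpr (hz n))]
  · have hscale : Tendsto (fun n => ‖a‖ / (‖z n‖ ^ 2 * ‖b‖)) atTop (𝓝 1) := by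
      simpa [div_self (norm_ne_zero_iff.mpr ha), Pi.div_def] using
        (tendsto_const_nhds (x := ‖a‖)).div hnorm (norm_ne_zero_iff.mpr ha)
    have hlim := hscale.smul hconj
    rw [one_smul] at hlim
    refine hlim.congr fun n => ?_
    rw [star_smul_mul_mul_smul, div_mul_div_comm, Real.mul_self_sqrt (by positivity),
      div_div, mul_comm ‖b‖, ← sq]

theorem exists_seq_of_forall_exists_near {a b : A} (ha : a ≠ 0) (hb : b ≠ 0)
    (hnear : ∀ c ε : ℝ, 0 < c → c < ‖b‖ → 0 < ε →
      ∃ z : A, ‖star z * b * z - a‖ < ε ∧ c * ‖z‖ ^ 2 ≤ ‖star z * b * z‖) :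
    ∃ z : ℕ → A, (∀ n, z n ≠ 0) ∧ Tendsto (fun n => star (z n) * b * z n) atTop (𝓝 a) ∧
      Tendsto (fun n => ‖z n‖ ^ 2 * ‖b‖) atTop (𝓝 ‖a‖) := by
  have ha_pos : 0 < ‖a‖ := norm_pos_iff.mpr ha
  have hb_pos : 0 < ‖b‖ := norm_pos_iff.mpr hb
  set ε : ℕ → ℝ := fun n => 1 / ((n : ℝ) + 2)
  have hε_pos : ∀ n, 0 < ε n := fun n => by positivity
  have hε_lt : ∀ n, ε n < 1 := fun n => by
    rw [div_lt_one (by positivity)]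
    linarith [n.cast_nonneg (α := ℝ)]
  have hε : Tendsto ε atTop (𝓝 0) :=
    (tendsto_one_div_add_atTop_nhds_zero_nat.comp (tendsto_add_atTop_nat 1)).congr fun n => by
      push_cast [ε, Function.comp_apply]; ring
  have hc : ∀ n, 0 < (1 - ε n) * ‖b‖ := fun n => mul_pos (by linarith [hε_lt n]) hb_pos
  have hcb : ∀ n, (1 - ε n) * ‖b‖ < ‖b‖ := fun n =>
    mul_lt_of_lt_one_left hb_pos (by linarith [hε_pos n])
  choose z hz_near hz_le using fun n =>
    hnear _ _ (hc n) (hcb n) (mul_pos (hε_pos n) ha_pos)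
  have hconj : Tendsto (fun n => star (z n) * b * z n) atTop (𝓝 a) := by
    rw [tendsto_iff_norm_sub_tendsto_zero]
    exact squeeze_zero (fun n => norm_nonneg _) (fun n => (hz_near n).le)
      (by simpa using hε.mul_const ‖a‖)
  refine ⟨z, fun n hzn => ?_, hconj, ?_⟩
  · have h := hz_near n
    simp only [hzn, star_zero, zero_mul, zero_sub, norm_neg] at h
    exact (h.trans (mul_lt_of_lt_one_left ha_pos (hε_lt n))).false
  · have hupper : Tendsto (fun n => ‖star (z n) * b * z n‖ / (1 - ε n)) atTop (𝓝 ‖a‖) := by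
      simpa [Pi.div_def] using
        hconj.norm.div (tendsto_const_nhds.sub hε) (by norm_num : (1 : ℝ) - 0 ≠ 0)
    refine tendsto_of_tendsto_of_tendsto_of_le_of_le hconj.norm hupper
      (fun n => norm_star_mul_mul_le _ _) (fun n => ?_)
    rw [le_div_iff₀ (by linarith [hε_lt n])]
    linarith [hz_le n]

end Norm

section Order

variable {A : Type*} [NonUnitalCStarAlgebra A] [PartialOrder A] [StarOrderedRing A]

lemma mul_norm_sq_le_of_smul_star_mul_self_le {c : ℝ} (hc : 0 ≤ c) {x y : A}
    (h : c • (star x * x) ≤ y) : c * ‖x‖ ^ 2 ≤ ‖y‖ := by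
  have := CStarAlgebra.norm_le_norm_of_nonneg_of_le (smul_nonneg hc (star_mul_self_nonneg x)) h
  rwa [norm_smul, CStarRing.norm_star_mul_self, Real.norm_of_nonneg hc, ← sq] at this

theorem exists_star_mul_mul_eq_conj_cfcₙ {b : A} (hb : 0 ≤ b) {c : ℝ} (hc : 0 < c)
    {f : ℝ → ℝ} (hf : Continuous f) (hf_nonneg : ∀ t, 0 ≤ f t) (hf_zero : ∀ t ≤ c, f t = 0)
    (w : A) :
    ∃ z : A, star z * b * z = star w * cfcₙ f b * w ∧ c • (star z * z) ≤ star z * b * z := by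
  -- `max t c` in place of `t` keeps `g` continuous and changes nothing where `f ≠ 0`.
  have hmax : ∀ t, 0 < max t c := fun t => hc.trans_le (le_max_right t c)
  set g : ℝ → ℝ := fun t => √(f t / max t c)
  have hg : Continuous g :=
    (hf.div (continuous_id.max continuous_const) fun t => (hmax t).ne').sqrt
  have hg0 : g 0 = 0 := by simp [g, hf_zero 0 hc.le]
  have hgg : ∀ t, g t * g t = f t / max t c := fun t =>
    Real.mul_self_sqrt (div_nonneg (hf_nonneg t) (hmax t).le)
  have hgtg : ∀ t, g t * t * g t = f t := by
    intro t
    rcases le_or_gt t c with ht | ht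
    · simp [g, hf_zero t ht]
    · rw [mul_right_comm, hgg, max_eq_left ht.le, div_mul_cancel₀ _ (hc.trans ht).ne']
  have hcgg : ∀ t, c * (g t * g t) ≤ f t := by
    intro t
    rw [hgg, mul_div_assoc', div_le_iff₀ (hmax t), mul_comm c]
    exact mul_le_mul_of_nonneg_left (le_max_right t c) (hf_nonneg t)
  set G := cfcₙ g b
  have hG : star G = G := (cfcₙ_predicate g b).star_eq
  have hGbG : G * b * G = cfcₙ f b := by
    rw [← cfcₙ_congr (fun t _ => hgtg t), cfcₙ_mul (fun t => g t * t) g b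
      (hg.mul continuous_id).continuousOn (by simp [hg0]) hg.continuousOn hg0,
      cfcₙ_mul g (fun t => t) b hg.continuousOn hg0, cfcₙ_id' ℝ b]
  have hGG : c • (G * G) ≤ cfcₙ f b := by
    rw [← cfcₙ_mul g g b hg.continuousOn hg0 hg.continuousOn hg0,
      ← cfcₙ_const_mul c (fun t => g t * g t) b (hg.mul hg).continuousOn (by simp [hg0])]
    exact cfcₙ_mono (fun t _ => hcgg t) (continuous_const.mul (hg.mul hg)).continuousOn
      hf.continuousOn (by simp [hg0]) (hf_zero 0 hc.le)
  have hconj : star (G * w) * b * (G * w) = star w * cfcₙ f b * w := by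
    rw [← hGbG, star_mul, hG]
    simp only [mul_assoc]
  refine ⟨G * w, hconj, hconj ▸ ?_⟩
  calc c • (star (G * w) * (G * w)) = star w * (c • (G * G)) * w := by
        rw [star_mul, hG, mul_smul_comm, smul_mul_assoc]
        simp only [mul_assoc]
    _ ≤ star w * cfcₙ f b * w := star_left_conjugate_le_conjugate hGG w

theorem CuntzLE.exists_near_with_norm_bound {a b : A} {f : ℝ → ℝ} (hab : CuntzLE a (cfcₙ f b))
    (hb : 0 ≤ b) {c : ℝ} (hc : 0 < c) (hf : Continuous f) (hf_nonneg : ∀ t, 0 ≤ f t)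
    (hf_zero : ∀ t ≤ c, f t = 0) {ε : ℝ} (hε : 0 < ε) :
    ∃ z : A, ‖star z * b * z - a‖ < ε ∧ c * ‖z‖ ^ 2 ≤ ‖star z * b * z‖ := by
  obtain ⟨w, hw⟩ := hab
  obtain ⟨N, hN⟩ := (hw.eventually (Metric.ball_mem_nhds a hε)).exists
  rw [dist_eq_norm] at hN
  obtain ⟨z, hz_eq, hz_le⟩ := exists_star_mul_mul_eq_conj_cfcₙ hb hc hf hf_nonneg hf_zero (w N)
  exact ⟨z, hz_eq ▸ hN, mul_norm_sq_le_of_smul_star_mul_self_le hc.le hz_le⟩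

theorem exists_near_with_norm_bound_of_forall_cuntzLE {a b : A} (hb : 0 ≤ b)
    (hyp : ∀ f : ℝ → ℝ, ContinuousOn f (Set.Icc 0 ‖b‖) →
      (∀ t ∈ Set.Icc (0:ℝ) ‖b‖, f t ∈ Set.Icc (0:ℝ) 1) →
      f 0 = 0 → f ‖b‖ ≠ 0 → CuntzLE a (cfcₙ f b))
    {c ε : ℝ} (hc : 0 < c) (hcb : c < ‖b‖) (hε : 0 < ε) :
    ∃ z : A, ‖star z * b * z - a‖ < ε ∧ c * ‖z‖ ^ 2 ≤ ‖star z * b * z‖ := by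
  have hgap : 0 < ‖b‖ - c := sub_pos.mpr hcb
  set f : ℝ → ℝ := fun t => max (t - c) 0 / (‖b‖ - c)
  have hf : Continuous f := by fun_prop
  have hf_nonneg : ∀ t, 0 ≤ f t := fun t => div_nonneg (le_max_right _ _) hgap.le
  have hf_zero : ∀ t ≤ c, f t = 0 := fun t ht => by simp [f, ht]
  have hf_le : ∀ t ≤ ‖b‖, f t ≤ 1 := fun t ht =>
    div_le_one_of_le₀ (max_le (by linarith) hgap.le) hgap.le
  have hf_norm : f ‖b‖ = 1 := by simp [f, hcb.le, hgap.ne']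
  exact (hyp f hf.continuousOn (fun t ht => ⟨hf_nonneg t, hf_le t ht.2⟩)
    (hf_zero 0 hc.le) (by simp [hf_norm])).exists_near_with_norm_bound hb hc hf hf_nonneg
    hf_zero hε

end Order

theorem cuntzLE_with_norm_control_general {A : Type*} [NonUnitalCStarAlgebra A]
    [PartialOrder A] [StarOrderedRing A] (a b : A) (hb : 0 ≤ b)
    (hbne : b ≠ 0)
    (hyp : ∀ f : ℝ → ℝ, ContinuousOn f (Set.Icc 0 ‖b‖) →
      (∀ t ∈ Set.Icc (0:ℝ) ‖b‖, f t ∈ Set.Icc (0:ℝ) 1) →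
      f 0 = 0 → f ‖b‖ ≠ 0 → CuntzLE a (cfcₙ f b)) :
    ∃ z : ℕ → A, (∀ n, ‖z n‖ = Real.sqrt (‖a‖ / ‖b‖)) ∧
      Filter.Tendsto (fun n => star (z n) * b * z n) Filter.atTop (𝓝 a) := by
  rcases eq_or_ne a 0 with rfl | ha
  · exact ⟨0, fun n => by simp, by simp⟩
  obtain ⟨z, hz, hconj, hnorm⟩ := exists_seq_of_forall_exists_near ha hbne
    fun c ε hc hcb hε => exists_near_with_norm_bound_of_forall_cuntzLE hb hyp hc hcb hε
  exact exists_norm_eq_of_tendsto_norm_sq_mul ha hz hconj hnorm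

/-- If `a, b ≥ 0`, `b ≠ 0`, and `a ≾ f(b)` for every continuous `f : [0,‖b‖] → [0,1]`
with `f 0 = 0` and `f ‖b‖ ≠ 0`, then there is a sequence `(z_n)` with
`‖z_n‖ = (‖a‖/‖b‖)^{1/2}` and `z_n* b z_n → a`. -/
theorem cuntzLE_with_norm_control {A : Type*} [NonUnitalCStarAlgebra A]
    [PartialOrder A] [StarOrderedRing A] (a b : A) (ha : 0 ≤ a) (hb : 0 ≤ b)
    (hbne : b ≠ 0)
    (hyp : ∀ f : ℝ → ℝ, ContinuousOn f (Set.Icc 0 ‖b‖) →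
      (∀ t ∈ Set.Icc (0:ℝ) ‖b‖, f t ∈ Set.Icc (0:ℝ) 1) →
      f 0 = 0 → f ‖b‖ ≠ 0 → CuntzLE a (cfcₙ f b)) :
    ∃ z : ℕ → A, (∀ n, ‖z n‖ = Real.sqrt (‖a‖ / ‖b‖)) ∧
      Filter.Tendsto (fun n => star (z n) * b * z n) Filter.atTop (𝓝 a) :=
  cuntzLE_with_norm_control_general a b hb hbne hyp
end

section
/- Let φ₁, …, φ_n : A → B be completely positive contractive order zero maps between C*-algebras with pairwise orthogonal ranges (φ_i(a)φ_j(a') = 0 for i ≠ j and all a, a' ∈ A), and suppose φ := ∑_i φ_i is contractive. Then φ is a completely positive contractive order zero map, and for every positive contraction f ∈ C₀((0,1]), the functional calculus satisfies f(φ) = ∑_{i=1}^n f(φ_i). -/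
open unitInterval

section ConeDefs

variable {A B : Type*} [NonUnitalCStarAlgebra A] [NonUnitalCStarAlgebra B]
  [PartialOrder A] [StarOrderedRing A] [PartialOrder B] [StarOrderedRing B]

/-- An element of the cone `C₀((0,1]) ⊗ A ≅ C₀((0,1], A)`, modelled as a continuous
function `[0,1] → A` vanishing at `0`. -/
def IsConeElem (F : unitInterval → A) : Prop := Continuous F ∧ F 0 = 0

/-- `ρ` is a *-homomorphism on the cone `C₀((0,1]) ⊗ A` (modelled as functions
`[0,1] → A` vanishing at `0`, with pointwise operations). -/
def IsConeHom (ρ : (unitInterval → A) → B) : Prop :=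
  (∀ F G : unitInterval → A, IsConeElem F → IsConeElem G → ρ (F + G) = ρ F + ρ G) ∧
  (∀ F G : unitInterval → A, IsConeElem F → IsConeElem G → ρ (F * G) = ρ F * ρ G) ∧
  (∀ F : unitInterval → A, IsConeElem F → ρ (star F) = star (ρ F)) ∧
  (∀ (c : ℂ) (F : unitInterval → A), IsConeElem F → ρ (c • F) = c • ρ F)

/-- `ρ` is the *-homomorphism on the cone induced by the order zero map `φ`,
i.e. `ρ (id_{(0,1]} ⊗ a) = φ a` for all `a`. -/
def InducedBy (ρ : (unitInterval → A) → B) (φ : A → B) : Prop :=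
  IsConeHom ρ ∧ ∀ a : A, ρ (fun t => (t : ℝ) • a) = φ a

/-- Complete positivity of a linear map between C*-algebras. -/
def IsCompletelyPositive (φ : A →ₗ[ℂ] B) : Prop :=
  ∀ (n : ℕ) (a : Fin n → A) (v : Fin n → B),
    0 ≤ ∑ i, ∑ j, star (v i) * φ (star (a i) * a j) * v j

/-- A map is order zero if it preserves orthogonality of positive elements. -/
def IsOrderZero (φ : A → B) : Prop :=
  ∀ a b : A, 0 ≤ a → 0 ≤ b → a * b = 0 → φ a * φ b = 0

/-- A completely positive contractive order zero map. -/
def IsCpcOrderZero (φ : A →ₗ[ℂ] B) : Prop :=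
  IsCompletelyPositive φ ∧ (∀ a : A, ‖φ a‖ ≤ ‖a‖) ∧ IsOrderZero φ

end ConeDefs

section AuxBasic

variable {A B : Type*} [NonUnitalCStarAlgebra A] [NonUnitalCStarAlgebra B]
  [PartialOrder A] [StarOrderedRing A] [PartialOrder B] [StarOrderedRing B]

lemma unitInterval_coe_zero' : ((0 : unitInterval) : ℝ) = 0 := rfl

lemma isConeElem_smulFun {g : unitInterval → ℝ} (hg : Continuous g) (hg0 : g 0 = 0) (a : A) :
    IsConeElem (fun t => g t • a) :=
  ⟨hg.smul continuous_const, by simp [hg0]⟩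

lemma isConeElem_id_smul (a : A) : IsConeElem (fun t : unitInterval => (t : ℝ) • a) :=
  isConeElem_smulFun continuous_subtype_val rfl a

lemma isConeElem_mono (k : ℕ) (a : A) :
    IsConeElem (fun t : unitInterval => (t : ℝ) ^ (k + 1) • a) :=
  isConeElem_smulFun (by fun_prop) (by simp [unitInterval_coe_zero']) a

variable {ρ : (unitInterval → A) → B} {φ : A → B}

lemma rho_zero (hρ : InducedBy ρ φ) : ρ 0 = 0 := by
  have h0 : IsConeElem (0 : unitInterval → A) := ⟨continuous_const, rfl⟩
  have h := hρ.1.1 0 0 h0 h0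
  rw [add_zero] at h
  exact add_eq_left.mp h.symm

lemma rho_one_smul (hρ : InducedBy ρ φ) (b : A) :
    ρ (fun t : unitInterval => (t : ℝ) ^ (0 + 1) • b) = φ b := by
  have h : (fun t : unitInterval => (t : ℝ) ^ (0 + 1) • b)
      = fun t : unitInterval => (t : ℝ) • b := by
    funext t; simp
  rw [h]; exact hρ.2 b

lemma rho_mono_mul (hρ : InducedBy ρ φ) (k : ℕ) (b c : A) :
    ρ (fun t : unitInterval => (t : ℝ) ^ (k + 1 + 1) • (b * c))
      = φ b * ρ (fun t : unitInterval => (t : ℝ) ^ (k + 1) • c) := by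
  have h := hρ.1.2.1 _ _ (isConeElem_id_smul b) (isConeElem_mono k c)
  rw [← hρ.2 b, ← h]
  congr 1
  funext t
  show (t : ℝ) ^ (k + 1 + 1) • (b * c) = ((t : ℝ) • b) * ((t : ℝ) ^ (k + 1) • c)
  rw [smul_mul_smul_comm, ← pow_succ']

end AuxBasic

section Norm

variable (A : Type*) {B : Type*} [NonUnitalCStarAlgebra A] [NonUnitalCStarAlgebra B]
  [PartialOrder A] [StarOrderedRing A] [PartialOrder B] [StarOrderedRing B]

/-- The non-unital star subalgebra of `C([0,1], A)` of functions vanishing at `0`. -/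
def coneAlg : NonUnitalStarSubalgebra ℂ C(unitInterval, A) where
  carrier := {F | F 0 = 0}
  add_mem' {F G} hF hG := by
    simp only [Set.mem_setOf_eq, ContinuousMap.add_apply] at *
    rw [hF, hG, add_zero]
  zero_mem' := rfl
  mul_mem' {F G} hF hG := by
    simp only [Set.mem_setOf_eq, ContinuousMap.mul_apply] at *
    rw [hF, zero_mul]
  smul_mem' c F hF := by
    simp only [Set.mem_setOf_eq, ContinuousMap.smul_apply] at *
    rw [hF, smul_zero]
  star_mem' {F} hF := by
    simp only [Set.mem_setOf_eq, ContinuousMap.star_apply] at *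
    rw [hF, star_zero]

instance coneAlg_isClosed : IsClosed ((coneAlg A : Set C(unitInterval, A))) := by
  have h : (coneAlg A : Set C(unitInterval, A)) = (fun F : C(unitInterval, A) => F 0) ⁻¹' {0} := by
    ext F; exact Iff.rfl
  rw [h]
  exact isClosed_singleton.preimage (ContinuousEvalConst.continuous_eval_const 0)

variable {A}

/-- Automatic continuity: a cone hom is contractive on cone elements. -/
lemma rho_norm_le {ρ : (unitInterval → A) → B} {φ : A → B} (hρ : InducedBy ρ φ)
    {F : unitInterval → A} (hF : IsConeElem F) {C : ℝ} (hC : 0 ≤ C)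
    (hFC : ∀ t, ‖F t‖ ≤ C) : ‖ρ F‖ ≤ C := by
  let Φ : coneAlg A →⋆ₙₐ[ℂ] B :=
  { toFun := fun G => ρ ⇑(G : C(unitInterval, A))
    map_add' := fun G H => hρ.1.1 _ _ ⟨map_continuous _, G.2⟩ ⟨map_continuous _, H.2⟩
    map_zero' := rho_zero hρ
    map_mul' := fun G H => hρ.1.2.1 _ _ ⟨map_continuous _, G.2⟩ ⟨map_continuous _, H.2⟩
    map_smul' := fun c G => hρ.1.2.2.2 c _ ⟨map_continuous _, G.2⟩
    map_star' := fun G => hρ.1.2.2.1 _ ⟨map_continuous _, G.2⟩ }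
  have hFm : (⟨F, hF.1⟩ : C(unitInterval, A)) ∈ coneAlg A := hF.2
  have hb := NonUnitalStarAlgHom.norm_apply_le Φ (⟨⟨F, hF.1⟩, hFm⟩ : coneAlg A)
  refine le_trans hb ?_
  have h : ‖(⟨⟨F, hF.1⟩, hFm⟩ : coneAlg A)‖ = ‖(⟨F, hF.1⟩ : C(unitInterval, A))‖ := rfl
  rw [h]
  exact (ContinuousMap.norm_le _ hC).mpr hFC

end Norm

section AuxSum

variable {A B : Type*} [NonUnitalCStarAlgebra A] [NonUnitalCStarAlgebra B]
  [PartialOrder A] [StarOrderedRing A] [PartialOrder B] [StarOrderedRing B]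
  {n : ℕ} {φi : Fin n → (A →ₗ[ℂ] B)} {ρi : Fin n → ((unitInterval → A) → B)}
  {ρ : (unitInterval → A) → B} {φ : A →ₗ[ℂ] B}

lemma orth_aux (hρi : ∀ i, InducedBy (ρi i) (φi i))
    (horth : ∀ i j, i ≠ j → ∀ a a' : A, φi i a * φi j a' = 0) :
    ∀ (k : ℕ) {i j : Fin n}, i ≠ j → ∀ (x : A) {b : A}, 0 ≤ b →
      φi i x * ρi j (fun t : unitInterval => (t : ℝ) ^ (k + 1) • b) = 0 := by
  intro k
  induction k with
  | zero =>
    intro i j hij x b hb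
    rw [rho_one_smul (hρi j)]
    exact horth i j hij x b
  | succ k ih =>
    intro i j hij x b hb
    have hs : (0 : A) ≤ CFC.sqrt b := CFC.sqrt_nonneg (a := b)
    have hss : CFC.sqrt b * CFC.sqrt b = b := CFC.sqrt_mul_sqrt_self b hb
    have hmul := rho_mono_mul (hρi j) k (CFC.sqrt b) (CFC.sqrt b)
    rw [hss] at hmul
    rw [hmul, ← mul_assoc, horth i j hij x (CFC.sqrt b), zero_mul]

lemma sum_rho_pos (hρ : InducedBy ρ φ) (hρi : ∀ i, InducedBy (ρi i) (φi i))
    (horth : ∀ i j, i ≠ j → ∀ a a' : A, φi i a * φi j a' = 0)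
    (hφsum : ∀ x : A, φ x = ∑ i, φi i x) :
    ∀ (k : ℕ) {b : A}, 0 ≤ b →
      ρ (fun t : unitInterval => (t : ℝ) ^ (k + 1) • b)
        = ∑ i, ρi i (fun t : unitInterval => (t : ℝ) ^ (k + 1) • b) := by
  intro k
  induction k with
  | zero =>
    intro b hb
    rw [rho_one_smul hρ, hφsum]
    exact Finset.sum_congr rfl fun i _ => (rho_one_smul (hρi i) b).symm
  | succ k ih =>
    intro b hb
    have hs : (0 : A) ≤ CFC.sqrt b := CFC.sqrt_nonneg (a := b)
    have hss : CFC.sqrt b * CFC.sqrt b = b := CFC.sqrt_mul_sqrt_self b hb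
    have hmul := rho_mono_mul hρ k (CFC.sqrt b) (CFC.sqrt b)
    rw [hss] at hmul
    rw [hmul, hφsum, ih hs, Finset.sum_mul_sum]
    refine Finset.sum_congr rfl fun i _ => ?_
    have hdiag : ∑ j, φi i (CFC.sqrt b) *
        ρi j (fun t : unitInterval => (t : ℝ) ^ (k + 1) • CFC.sqrt b)
        = φi i (CFC.sqrt b) * ρi i (fun t : unitInterval => (t : ℝ) ^ (k + 1) • CFC.sqrt b) := by
      refine Finset.sum_eq_single i (fun j _ hji => ?_) (fun h => absurd (Finset.mem_univ i) h)
      exact orth_aux hρi horth k (Ne.symm hji) (CFC.sqrt b) hs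
    rw [hdiag]
    have hmuli := rho_mono_mul (hρi i) k (CFC.sqrt b) (CFC.sqrt b)
    rw [hss] at hmuli
    exact hmuli.symm

lemma sum_rho_all (hρ : InducedBy ρ φ) (hρi : ∀ i, InducedBy (ρi i) (φi i))
    (horth : ∀ i j, i ≠ j → ∀ a a' : A, φi i a * φi j a' = 0)
    (hφsum : ∀ x : A, φ x = ∑ i, φi i x) (k : ℕ) (a : A) :
    ρ (fun t : unitInterval => (t : ℝ) ^ (k + 1) • a)
      = ∑ i, ρi i (fun t : unitInterval => (t : ℝ) ^ (k + 1) • a) := by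
  set T : A → B := fun x => ρ (fun t : unitInterval => (t : ℝ) ^ (k + 1) • x)
    - ∑ i, ρi i (fun t : unitInterval => (t : ℝ) ^ (k + 1) • x) with hT
  suffices h : T a = 0 by
    have := sub_eq_zero.mp h
    exact this
  have hadd : ∀ x y : A, T (x + y) = T x + T y := by
    intro x y
    have hfun : (fun t : unitInterval => (t : ℝ) ^ (k + 1) • (x + y))
        = (fun t : unitInterval => (t : ℝ) ^ (k + 1) • x)
          + fun t : unitInterval => (t : ℝ) ^ (k + 1) • y := by
      funext t
      show (t : ℝ) ^ (k + 1) • (x + y)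
        = (t : ℝ) ^ (k + 1) • x + (t : ℝ) ^ (k + 1) • y
      rw [smul_add]
    simp only [hT, hfun]
    rw [hρ.1.1 _ _ (isConeElem_mono k x) (isConeElem_mono k y),
      Finset.sum_congr rfl (fun i _ => (hρi i).1.1 _ _ (isConeElem_mono k x) (isConeElem_mono k y)),
      Finset.sum_add_distrib]
    abel
  have hsmul : ∀ (c : ℂ) (x : A), T (c • x) = c • T x := by
    intro c x
    have hfun : (fun t : unitInterval => (t : ℝ) ^ (k + 1) • (c • x))
        = c • fun t : unitInterval => (t : ℝ) ^ (k + 1) • x := by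
      funext t
      show (t : ℝ) ^ (k + 1) • (c • x) = c • ((t : ℝ) ^ (k + 1) • x)
      rw [smul_comm]
    simp only [hT, hfun]
    rw [hρ.1.2.2.2 c _ (isConeElem_mono k x),
      Finset.sum_congr rfl (fun i _ => (hρi i).1.2.2.2 c _ (isConeElem_mono k x)),
      ← Finset.smul_sum, smul_sub]
  have hsub : ∀ x y : A, T (x - y) = T x - T y := by
    intro x y
    have h1 := hadd (x - y) y
    rw [sub_add_cancel] at h1
    rw [eq_sub_iff_add_eq, ← h1]
  have hpos : ∀ x : A, 0 ≤ x → T x = 0 := fun x hx =>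
    sub_eq_zero.mpr (sum_rho_pos hρ hρi horth hφsum k hx)
  have hsa : ∀ x : A, IsSelfAdjoint x → T x = 0 := by
    intro x hx
    rw [← CFC.posPart_sub_negPart x hx, hsub, hpos _ (CFC.posPart_nonneg x),
      hpos _ (CFC.negPart_nonneg x), sub_self]
  have hx1 : IsSelfAdjoint (a + star a) := by
    simp [IsSelfAdjoint, star_add, add_comm]
  have hx2 : IsSelfAdjoint (Complex.I • (star a - a)) := by
    simp only [IsSelfAdjoint, star_smul, star_sub, star_star, Complex.star_def, Complex.conj_I,
      neg_smul, smul_sub, neg_sub]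
    abel
  have h2 : a = (2⁻¹ : ℂ) • ((a + star a) + Complex.I • (Complex.I • (star a - a))) := by
    rw [smul_smul, Complex.I_mul_I, neg_one_smul, neg_sub]
    rw [smul_add, smul_add, smul_sub]
    module
  calc T a = T ((2⁻¹ : ℂ) • ((a + star a) + Complex.I • (Complex.I • (star a - a)))) := by
        rw [← h2]
    _ = (2⁻¹ : ℂ) • (T (a + star a) + Complex.I • T (Complex.I • (star a - a))) := by
        rw [hsmul, hadd, hsmul]
    _ = 0 := by rw [hsa _ hx1, hsa _ hx2, smul_zero, add_zero, smul_zero]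

open Polynomial in
lemma sum_rho_poly (hρ : InducedBy ρ φ) (hρi : ∀ i, InducedBy (ρi i) (φi i))
    (horth : ∀ i j, i ≠ j → ∀ a a' : A, φi i a * φi j a' = 0)
    (hφsum : ∀ x : A, φ x = ∑ i, φi i x) (q : ℝ[X]) (a : A) :
    ρ (fun t : unitInterval => (q.eval (t : ℝ) - q.coeff 0) • a)
      = ∑ i, ρi i (fun t : unitInterval => (q.eval (t : ℝ) - q.coeff 0) • a) := by
  induction q using Polynomial.induction_on' with
  | add p r hp hr =>
    have hcone : ∀ s : ℝ[X], IsConeElem (fun t : unitInterval => (s.eval (t : ℝ) - s.coeff 0) • a) := by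
      intro s
      refine isConeElem_smulFun ?_ ?_ a
      · exact (s.continuous.comp continuous_subtype_val).sub continuous_const
      · rw [unitInterval_coe_zero', coeff_zero_eq_eval_zero, sub_self]
    have hfun : (fun t : unitInterval => ((p + r).eval (t : ℝ) - (p + r).coeff 0) • a)
        = (fun t : unitInterval => (p.eval (t : ℝ) - p.coeff 0) • a)
          + fun t : unitInterval => (r.eval (t : ℝ) - r.coeff 0) • a := by
      funext t
      show ((p + r).eval (t : ℝ) - (p + r).coeff 0) • a
        = (p.eval (t : ℝ) - p.coeff 0) • a + (r.eval (t : ℝ) - r.coeff 0) • a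
      rw [← add_smul, eval_add, coeff_add]
      congr 1
      ring
    rw [hfun, hρ.1.1 _ _ (hcone p) (hcone r),
      Finset.sum_congr rfl (fun i _ => (hρi i).1.1 _ _ (hcone p) (hcone r)),
      Finset.sum_add_distrib, hp, hr]
  | monomial m c =>
    cases m with
    | zero =>
      have hfun : (fun t : unitInterval => ((monomial 0 c).eval (t : ℝ)
          - (monomial 0 c).coeff 0) • a) = (0 : unitInterval → A) := by
        funext t
        show ((monomial 0 c).eval (t : ℝ) - (monomial 0 c).coeff 0) • a = 0
        simp [eval_monomial, coeff_monomial]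
      rw [hfun, rho_zero hρ]
      exact (Finset.sum_eq_zero fun i _ => rho_zero (hρi i)).symm
    | succ m =>
      have hfun : (fun t : unitInterval => ((monomial (m + 1) c).eval (t : ℝ)
          - (monomial (m + 1) c).coeff 0) • a)
          = fun t : unitInterval => (t : ℝ) ^ (m + 1) • (c • a) := by
        funext t
        show ((monomial (m + 1) c).eval (t : ℝ) - (monomial (m + 1) c).coeff 0) • a
          = (t : ℝ) ^ (m + 1) • (c • a)
        rw [eval_monomial, coeff_monomial, if_neg (by omega), sub_zero, mul_smul, smul_comm]
      rw [hfun]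
      exact sum_rho_all hρ hρi horth hφsum m (c • a)

end AuxSum

/-- If `φ₁, …, φ_n : A → B` are cpc order zero maps with pairwise orthogonal ranges and
`φ := ∑ φ_i` is contractive, then `φ` is cpc order zero and, for every positive
contraction `f ∈ C₀((0,1])`, the functional calculus satisfies `f(φ) = ∑ f(φ_i)`;
here `f(φ)(a) = ρ_φ (f ⊗ a)` where `ρ_φ` is the *-homomorphism on the cone induced
by `φ`. -/
theorem cpcOrderZero_sum_and_functional_calculus
    {A B : Type*} [NonUnitalCStarAlgebra A] [NonUnitalCStarAlgebra B]
    [PartialOrder A] [StarOrderedRing A] [PartialOrder B] [StarOrderedRing B]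
    (n : ℕ) (φi : Fin n → (A →ₗ[ℂ] B)) (hφi : ∀ i, IsCpcOrderZero (φi i))
    (horth : ∀ i j, i ≠ j → ∀ a a' : A, φi i a * φi j a' = 0)
    (φ : A →ₗ[ℂ] B) (hφsum : φ = ∑ i, φi i) (hcontr : ∀ a : A, ‖φ a‖ ≤ ‖a‖)
    (ρ : (unitInterval → A) → B) (hρ : InducedBy ρ φ)
    (ρi : Fin n → ((unitInterval → A) → B)) (hρi : ∀ i, InducedBy (ρi i) (φi i))
    (f : unitInterval → ℝ) (hf : Continuous f) (hf0 : f 0 = 0)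
    (hfc : ∀ t, f t ∈ Set.Icc (0:ℝ) 1) :
    IsCpcOrderZero φ ∧
      ∀ a : A, ρ (fun t => f t • a) = ∑ i, ρi i (fun t => f t • a) := by
  have hsw : ∀ x : A, φ x = ∑ i, φi i x := fun x => by
    rw [hφsum]; simp
  have hCP : IsCompletelyPositive φ := by
    intro m a v
    have h1 : ∑ i, ∑ j, star (v i) * φ (star (a i) * a j) * v j
        = ∑ k, ∑ i, ∑ j, star (v i) * φi k (star (a i) * a j) * v j := by
      have h2 : ∀ i j, star (v i) * φ (star (a i) * a j) * v j
          = ∑ k, star (v i) * φi k (star (a i) * a j) * v j := by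
        intro i j
        rw [hsw, Finset.mul_sum, Finset.sum_mul]
      calc ∑ i, ∑ j, star (v i) * φ (star (a i) * a j) * v j
          = ∑ i, ∑ j, ∑ k, star (v i) * φi k (star (a i) * a j) * v j :=
            Finset.sum_congr rfl fun i _ => Finset.sum_congr rfl fun j _ => h2 i j
        _ = ∑ i, ∑ k, ∑ j, star (v i) * φi k (star (a i) * a j) * v j :=
            Finset.sum_congr rfl fun i _ => Finset.sum_comm
        _ = ∑ k, ∑ i, ∑ j, star (v i) * φi k (star (a i) * a j) * v j := Finset.sum_comm
    rw [h1]
    exact Finset.sum_nonneg fun k _ => (hφi k).1 m a v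
  have hOZ : IsOrderZero φ := by
    intro x y hx hy hxy
    rw [hsw x, hsw y, Finset.sum_mul_sum]
    refine Finset.sum_eq_zero fun i _ => Finset.sum_eq_zero fun j _ => ?_
    by_cases hij : i = j
    · subst hij
      exact (hφi i).2.2 x y hx hy hxy
    · exact horth i j hij x y
  refine ⟨⟨hCP, hcontr, hOZ⟩, ?_⟩
  intro a
  set D := ρ (fun t => f t • a) - ∑ i, ρi i (fun t => f t • a) with hD
  have key0 : ∀ δ : ℝ, 0 < δ → ‖D‖ ≤ (n + 1 : ℝ) * (2 * δ * ‖a‖) := by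
    intro δ hδ
    set fC : C(unitInterval, ℝ) := ⟨f, hf⟩ with hfC
    obtain ⟨p, hp⟩ := exists_polynomial_near_continuousMap 0 1 fC δ hδ
    set g : unitInterval → ℝ := fun t => p.eval (t : ℝ) - p.coeff 0 with hg
    have hpt : ∀ t : unitInterval, |p.eval (t : ℝ) - f t| ≤ δ := by
      intro t
      have h1 := ContinuousMap.norm_coe_le_norm (p.toContinuousMapOn (Set.Icc 0 1) - fC) t
      rw [ContinuousMap.sub_apply] at h1
      simp only [Polynomial.toContinuousMapOn_apply, Polynomial.toContinuousMap_apply,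
        hfC, ContinuousMap.coe_mk] at h1
      calc |p.eval (t : ℝ) - f t| ≤ ‖p.toContinuousMapOn (Set.Icc 0 1) - fC‖ := h1
        _ ≤ δ := hp.le
    have hc0 : |p.coeff 0| ≤ δ := by
      have := hpt 0
      rw [unitInterval_coe_zero', hf0, sub_zero, ← Polynomial.coeff_zero_eq_eval_zero] at this
      exact this
    have habs : ∀ t : unitInterval, |f t - g t| ≤ 2 * δ := by
      intro t
      have h1 : f t - g t = -(p.eval (t : ℝ) - f t) + p.coeff 0 := by
        rw [hg]; ring
      rw [h1]
      calc |(-(p.eval (t : ℝ) - f t)) + p.coeff 0|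
          ≤ |(-(p.eval (t : ℝ) - f t))| + |p.coeff 0| := abs_add_le _ _
        _ ≤ δ + δ := by rw [abs_neg]; exact add_le_add (hpt t) hc0
        _ = 2 * δ := by ring
    have hgc : Continuous g := (p.continuous.comp continuous_subtype_val).sub continuous_const
    have hg0 : g 0 = 0 := by
      rw [hg]
      show p.eval ((0 : unitInterval) : ℝ) - p.coeff 0 = 0
      rw [unitInterval_coe_zero', Polynomial.coeff_zero_eq_eval_zero, sub_self]
    have hΔc : Continuous fun t : unitInterval => f t - g t := hf.sub hgc
    have hΔ0 : f 0 - g 0 = 0 := by rw [hf0, hg0, sub_self]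
    set Fg : unitInterval → A := fun t => g t • a with hFg
    set FΔ : unitInterval → A := fun t => (f t - g t) • a with hFΔ
    have cFg : IsConeElem Fg := isConeElem_smulFun hgc hg0 a
    have cFΔ : IsConeElem FΔ := isConeElem_smulFun hΔc hΔ0 a
    have hsplit : (fun t : unitInterval => f t • a) = Fg + FΔ := by
      funext t
      show f t • a = g t • a + (f t - g t) • a
      rw [← add_smul]
      congr 1
      ring
    have hpoly : ρ Fg = ∑ i, ρi i Fg :=
      sum_rho_poly hρ hρi horth hsw p a
    have h1 : ρ (fun t => f t • a) = ρ Fg + ρ FΔ := by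
      rw [hsplit]; exact hρ.1.1 _ _ cFg cFΔ
    have h2 : ∀ i, ρi i (fun t => f t • a) = ρi i Fg + ρi i FΔ := fun i => by
      rw [hsplit]; exact (hρi i).1.1 _ _ cFg cFΔ
    have hDeq : D = ρ FΔ - ∑ i, ρi i FΔ := by
      rw [hD, h1, Finset.sum_congr rfl (fun i _ => h2 i), Finset.sum_add_distrib, hpoly]
      abel
    have hFΔb : ∀ t, ‖FΔ t‖ ≤ 2 * δ * ‖a‖ := by
      intro t
      rw [hFΔ]
      show ‖(f t - g t) • a‖ ≤ 2 * δ * ‖a‖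
      rw [norm_smul, Real.norm_eq_abs]
      exact mul_le_mul_of_nonneg_right (habs t) (norm_nonneg a)
    have hCnn : (0 : ℝ) ≤ 2 * δ * ‖a‖ := by positivity
    have hb1 : ‖ρ FΔ‖ ≤ 2 * δ * ‖a‖ := rho_norm_le hρ cFΔ hCnn hFΔb
    have hb2 : ‖∑ i, ρi i FΔ‖ ≤ (n : ℝ) * (2 * δ * ‖a‖) := by
      refine le_trans (norm_sum_le _ _) ?_
      calc ∑ i : Fin n, ‖ρi i FΔ‖ ≤ ∑ _i : Fin n, 2 * δ * ‖a‖ :=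
            Finset.sum_le_sum fun i _ => rho_norm_le (hρi i) cFΔ hCnn hFΔb
        _ = (n : ℝ) * (2 * δ * ‖a‖) := by simp [Finset.sum_const, nsmul_eq_mul]
    calc ‖D‖ ≤ ‖ρ FΔ‖ + ‖∑ i, ρi i FΔ‖ := by rw [hDeq]; exact norm_sub_le _ _
      _ ≤ 2 * δ * ‖a‖ + (n : ℝ) * (2 * δ * ‖a‖) := add_le_add hb1 hb2
      _ = (n + 1 : ℝ) * (2 * δ * ‖a‖) := by ring
  have hkey : ∀ ε : ℝ, 0 < ε → ‖D‖ ≤ ε := by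
    intro ε hε
    set M : ℝ := (n + 1 : ℝ) * (2 * ‖a‖) with hM
    have hMnn : 0 ≤ M := by positivity
    have hδ : 0 < ε / (M + 1) := by positivity
    refine le_trans (key0 (ε / (M + 1)) hδ) ?_
    have h1 : (n + 1 : ℝ) * (2 * (ε / (M + 1)) * ‖a‖) = ε / (M + 1) * M := by
      rw [hM]; ring
    rw [h1]
    rw [div_mul_eq_mul_div, div_le_iff₀ (by linarith)]
    nlinarith
  have h0 : ‖D‖ ≤ 0 := by
    by_contra h
    push_neg at h
    have := hkey (‖D‖ / 2) (by linarith)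
    linarith
  have : D = 0 := norm_le_zero_iff.mp h0
  exact sub_eq_zero.mp this
end

section
/- Let X be the set [0,1) equipped with the topology whose open sets are ∅ together with the intervals [0,t) for 0 < t ≤ 1. Then X has no locally closed one-point subsets. -/
/-- The set `[0,1)`, regarded as a type with a (non-standard) topology defined below. -/
def X17 : Type := Set.Ico (0 : ℝ) 1

/-- The topology on `[0,1)` whose open sets are `∅` together with the sets `[0,t)` for
`0 < t ≤ 1` (these sets are precisely generated by this family). -/
instance : TopologicalSpace X17 :=
  TopologicalSpace.generateFrom
    {U : Set X17 | ∃ t : ℝ, 0 < t ∧ t ≤ 1 ∧ U = {x : X17 | x.1 < t}}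

private lemma X17_gen : ∀ {U : Set X17},
    TopologicalSpace.GenerateOpen
      {U : Set X17 | ∃ t : ℝ, 0 < t ∧ t ≤ 1 ∧ U = {x : X17 | x.1 < t}} U →
    (∀ a b : X17, b.1 ≤ a.1 → a ∈ U → b ∈ U) := by
  intro U h
  induction h with
  | basic V hV =>
    obtain ⟨t, _, _, rfl⟩ := hV
    intro a b hba ha
    exact lt_of_le_of_lt hba ha
  | univ => intro a b _ _; trivial
  | inter V W _ _ ihV ihW =>
    intro a b hba ha
    exact ⟨ihV a b hba ha.1, ihW a b hba ha.2⟩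
  | sUnion S _ ih =>
    intro a b hba ha
    obtain ⟨V, hVS, haV⟩ := ha
    exact ⟨V, hVS, ih V hVS a b hba haV⟩

private lemma X17_above : ∀ {U : Set X17},
    TopologicalSpace.GenerateOpen
      {U : Set X17 | ∃ t : ℝ, 0 < t ∧ t ≤ 1 ∧ U = {x : X17 | x.1 < t}} U →
    (∀ a : X17, a ∈ U → ∃ b : X17, a.1 < b.1 ∧ b ∈ U) := by
  intro U h
  induction h with
  | basic V hV =>
    obtain ⟨t, ht0, ht1, rfl⟩ := hV
    intro a ha
    have ha' : a.1 < t := ha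
    have h0 := a.2.1
    have h1 := a.2.2
    refine ⟨⟨(a.1 + t) / 2, ⟨by linarith, by linarith⟩⟩, by dsimp; linarith, ?_⟩
    show (a.1 + t) / 2 < t
    linarith
  | univ =>
    intro a _
    have h0 := a.2.1
    have h1 := a.2.2
    exact ⟨⟨(a.1 + 1) / 2, ⟨by linarith, by linarith⟩⟩, by dsimp; linarith, trivial⟩
  | inter V W hV hW ihV ihW =>
    intro a ha
    obtain ⟨b, hab, hbV⟩ := ihV a ha.1
    obtain ⟨c, hac, hcW⟩ := ihW a ha.2
    rcases le_total b.1 c.1 with hbc | hcb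
    · exact ⟨b, hab, hbV, X17_gen hW c b hbc hcW⟩
    · exact ⟨c, hac, X17_gen hV b c hcb hbV, hcW⟩
  | sUnion S _ ih =>
    intro a ha
    obtain ⟨V, hVS, haV⟩ := ha
    obtain ⟨b, hab, hbV⟩ := ih V hVS a haV
    exact ⟨b, hab, V, hVS, hbV⟩

/-- `[0,1)` with the topology `{∅} ∪ {[0,t) : 0 < t ≤ 1}` has no locally closed
one-point subsets. -/
theorem no_locally_closed_singletons_X17 (x : X17) :
    ¬ IsLocallyClosed ({x} : Set X17) := by
  rintro ⟨U, Z, hU, hZ, hUZ⟩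
  have hx : x ∈ U ∩ Z := by rw [← hUZ]; rfl
  have hU' : TopologicalSpace.GenerateOpen _ U := hU
  obtain ⟨y, hxy, hyU⟩ := X17_above hU' x hx.1
  have hyZ : y ∉ Z := by
    intro hyZ
    have : y ∈ U ∩ Z := ⟨hyU, hyZ⟩
    rw [← hUZ] at this
    have : y = x := this
    subst this
    exact lt_irrefl _ hxy
  have hZc : TopologicalSpace.GenerateOpen _ Zᶜ := hZ.isOpen_compl
  exact X17_gen hZc y x hxy.le hyZ hx.2
end
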